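/- arXiv:2308.14859 — 2 statements merged into one kernel-verified Lean document; each statement's English description precedes it below -/
import Mathlib

section
/- For every real x with -3/8 ≤ x ≤ -0.3144, one has -1 - 8x > 0, 1 - 14x > 0, and the inequality (248x + 43)/(56x - 4) ≤ 5·√((-1-8x)/(2(1-14x))). -/
/-! Since `56x - 4 = -4(1 - 14x)`, squaring turns the inequality into
`(248x + 43)² ≤ 200(-1 - 8x)(1 - 14x)`, and the difference of the two sides factors as
`(8x + 3)(-4888x - 683)`, which is nonnegative for `-3/8 ≤ x ≤ -683/4888 ≈ -0.1397`. -/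

theorem le_mul_sqrt_of_sq_le {p q k : ℝ} (hk : 0 ≤ k) (h : p ^ 2 ≤ k ^ 2 * q) :
    p ≤ k * √q :=
  calc p ≤ |p| := le_abs_self p
    _ ≤ √(k ^ 2 * q) := Real.abs_le_sqrt h
    _ = k * √q := by rw [Real.sqrt_mul (sq_nonneg k), Real.sqrt_sq hk]

theorem check2_factorization (x : ℝ) :
    200 * (-1 - 8 * x) * (1 - 14 * x) - (248 * x + 43) ^ 2 = (8 * x + 3) * (-4888 * x - 683) := by
  ring

theorem sq_le_check2_product {x : ℝ} (hx : -3/8 ≤ x) (hx' : x ≤ -683/4888) :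
    (248 * x + 43) ^ 2 ≤ 200 * (-1 - 8 * x) * (1 - 14 * x) := by
  rw [← sub_nonneg, check2_factorization]
  exact mul_nonneg (by linarith) (by linarith)

theorem check2_inequality (x : ℝ) (hx : -3/8 ≤ x) (hx' : x ≤ -0.3144) :
    0 < -1 - 8 * x ∧ 0 < 1 - 14 * x ∧
    (248 * x + 43) / (56 * x - 4) ≤
      5 * Real.sqrt ((-1 - 8 * x) / (2 * (1 - 14 * x))) := by
  norm_num at hx'
  have ha : 0 < -1 - 8 * x := by linarith
  have hb : 0 < 1 - 14 * x := by linarith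
  refine ⟨ha, hb, le_mul_sqrt_of_sq_le (by norm_num) ?_⟩
  rw [show 56 * x - 4 = -4 * (1 - 14 * x) by ring, div_pow, div_le_iff₀ (by positivity)]
  calc (248 * x + 43) ^ 2 ≤ 200 * (-1 - 8 * x) * (1 - 14 * x) := sq_le_check2_product hx (by linarith)
    _ = 5 ^ 2 * ((-1 - 8 * x) / (2 * (1 - 14 * x))) * (-4 * (1 - 14 * x)) ^ 2 := by
      field_simp
      ring
end

section
/- The function g(x) = -17(8x+3)/(164x+49) is increasing on [-3/8, -0.3144], and the function h(x) = 2/(q_x - 4), where q_x = 2/(5√((-1-8x)/(2(1-14x))) - 1) + 2, is decreasing on (-3/8, -0.3144]; moreover g(-θ*) < h(-θ*) for θ* = 0.31448..., hence g(x) < h(x) throughout the interval. -/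
/-!
`gfun` and `hfun` are assembled from linear fractional maps `x ↦ (a x + b) / (c x + d)`, which
are strictly increasing on each side of their pole when `a d - b c > 0` and strictly decreasing
when `a d - b c < 0`: `gfun x = (136 x + 51) / (-164 x - 49)`, and `hfun = φ ∘ √ ∘ r` with
`r x = (-8 x - 1) / (-28 x + 2)` and `φ t = (5 t - 1) / (-5 t + 2)`. The pole `t = 2/5` of `φ`
corresponds to `x = -3/8`, where the interval is open. Monotonicity then reduces `gfun < hfun` to
the right endpoint: `gfun x ≤ gfun (-0.3144) < 4 < hfun (-0.3144) ≤ hfun x`.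
-/

open Set

noncomputable def gfun (x : ℝ) : ℝ := -17 * (8 * x + 3) / (164 * x + 49)

noncomputable def hfun (x : ℝ) : ℝ :=
  2 / ((2 / (5 * Real.sqrt ((-1 - 8 * x) / (2 * (1 - 14 * x))) - 1) + 2) - 4)

noncomputable def linFrac (a b c d x : ℝ) : ℝ := (a * x + b) / (c * x + d)

theorem linFrac_strictMonoOn {a b c d : ℝ} (hdet : 0 < a * d - b * c) :
    StrictMonoOn (linFrac a b c d) {x | 0 < c * x + d} := by
  intro x hx y hy hxy
  rw [linFrac, linFrac, div_lt_div_iff₀ hx hy]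
  nlinarith [mul_pos hdet (sub_pos.2 hxy)]

theorem linFrac_strictAntiOn {a b c d : ℝ} (hdet : a * d - b * c < 0) :
    StrictAntiOn (linFrac a b c d) {x | 0 < c * x + d} := by
  intro x hx y hy hxy
  rw [linFrac, linFrac, div_lt_div_iff₀ hy hx]
  nlinarith [mul_pos (neg_pos.2 hdet) (sub_pos.2 hxy)]

theorem gfun_eq_linFrac : gfun = linFrac 136 51 (-164) (-49) := by
  funext x
  rw [gfun, linFrac, ← neg_div_neg_eq]
  ring_nf

theorem gfun_strictMonoOn : StrictMonoOn gfun (Iio (-49/164)) := by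
  rw [gfun_eq_linFrac]
  exact (linFrac_strictMonoOn (by norm_num)).mono fun x (hx : x < -49/164) =>
    show 0 < -164 * x + -49 by linarith

noncomputable def radicand (x : ℝ) : ℝ := (-1 - 8 * x) / (2 * (1 - 14 * x))

theorem radicand_eq_linFrac : radicand = linFrac (-8) (-1) (-28) 2 := by
  funext x
  rw [radicand, linFrac]
  ring_nf

theorem radicand_strictAntiOn : StrictAntiOn radicand (Iio (1/14)) := by
  rw [radicand_eq_linFrac]
  exact (linFrac_strictAntiOn (by norm_num)).mono fun x (hx : x < 1/14) =>
    show 0 < -28 * x + 2 by linarith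

theorem radicand_mem_Ioo {x : ℝ} (hx : x ∈ Ioo (-3/8) (-27/172)) :
    radicand x ∈ Ioo (1/25) (4/25) := by
  obtain ⟨h1, h2⟩ := hx
  have hd : 0 < 2 * (1 - 14 * x) := by linarith
  constructor
  · rw [radicand, lt_div_iff₀ hd]; linarith
  · rw [radicand, div_lt_iff₀ hd]; linarith

theorem sqrt_radicand_mem_Ioo {x : ℝ} (hx : x ∈ Ioo (-3/8) (-27/172)) :
    √(radicand x) ∈ Ioo (1/5) (2/5) := by
  obtain ⟨h1, h2⟩ := radicand_mem_Ioo hx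
  constructor
  · rw [Real.lt_sqrt (by norm_num)]; linarith
  · rw [Real.sqrt_lt' (by norm_num)]; linarith

theorem two_div_two_div_sub_one_add_two_sub_four {t : ℝ} (ht : t ≠ 1) :
    2 / ((2 / (t - 1) + 2) - 4) = (t - 1) / (2 - t) := by
  have ht' : t - 1 ≠ 0 := sub_ne_zero.2 ht
  calc 2 / ((2 / (t - 1) + 2) - 4) = 2 / (2 * (2 - t) / (t - 1)) := by
        congr 1; field_simp; ring
    _ = (t - 1) / (2 - t) := by rw [div_div_eq_mul_div, mul_div_mul_left _ _ two_ne_zero]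

theorem hfun_eq_linFrac {x : ℝ} (hx : 5 * √(radicand x) ≠ 1) :
    hfun x = linFrac 5 (-1) (-5) 2 (√(radicand x)) := by
  show 2 / ((2 / (5 * √(radicand x) - 1) + 2) - 4) = _
  rw [two_div_two_div_sub_one_add_two_sub_four hx, linFrac]
  ring_nf

theorem hfun_strictAntiOn : StrictAntiOn hfun (Ioo (-3/8) (-27/172)) := by
  have hφ : StrictMonoOn (linFrac 5 (-1) (-5) 2) (Ioo (1/5) (2/5)) :=
    (linFrac_strictMonoOn (by norm_num)).mono fun t (ht : t ∈ Ioo (1/5) (2/5)) =>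
      show 0 < -5 * t + 2 by linarith [ht.2]
  have hr : StrictAntiOn radicand (Ioo (-3/8) (-27/172)) :=
    radicand_strictAntiOn.mono fun x hx => show x < 1/14 from hx.2.trans (by norm_num)
  have hsqrt := Real.strictMonoOn_sqrt.comp_strictAntiOn hr
    fun x hx => (radicand_mem_Ioo hx).1.le.trans' (by norm_num)
  refine (hφ.comp_strictAntiOn hsqrt fun x hx => sqrt_radicand_mem_Ioo hx).congr fun x hx => ?_
  exact (hfun_eq_linFrac (by linarith [(sqrt_radicand_mem_Ioo hx).1])).symm

theorem gfun_lt_hfun_at_endpoint : gfun (-0.3144) < hfun (-0.3144) := by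
  have hu := sqrt_radicand_mem_Ioo (x := -0.3144) ⟨by norm_num, by norm_num⟩
  have hu₀ : 9/25 < √(radicand (-0.3144)) := by
    rw [Real.lt_sqrt (by norm_num), radicand]; norm_num
  calc gfun (-0.3144) < 4 := by norm_num [gfun]
    _ = linFrac 5 (-1) (-5) 2 (9/25) := by norm_num [linFrac]
    _ < linFrac 5 (-1) (-5) 2 (√(radicand (-0.3144))) :=
      linFrac_strictMonoOn (by norm_num) (show (0 : ℝ) < -5 * (9/25) + 2 by norm_num)
        (show 0 < -5 * √(radicand (-0.3144)) + 2 by linarith [hu.2]) hu₀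
    _ = hfun (-0.3144) := (hfun_eq_linFrac (by linarith [hu.1])).symm

theorem check1_monotonicity :
    StrictMonoOn gfun (Icc (-3/8 : ℝ) (-0.3144)) ∧
    StrictAntiOn hfun (Ioc (-3/8 : ℝ) (-0.3144)) ∧
    gfun (-0.31448) < hfun (-0.31448) ∧
    ∀ x ∈ Ioc (-3/8 : ℝ) (-0.3144), gfun x < hfun x := by
  have hg : StrictMonoOn gfun (Icc (-3/8 : ℝ) (-0.3144)) :=
    gfun_strictMonoOn.mono fun x hx => show x < -49/164 from hx.2.trans_lt (by norm_num)
  have hh : StrictAntiOn hfun (Ioc (-3/8 : ℝ) (-0.3144)) :=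
    hfun_strictAntiOn.mono (Ioc_subset_Ioo_right (by norm_num))
  have hlt : ∀ x ∈ Ioc (-3/8 : ℝ) (-0.3144), gfun x < hfun x := fun x hx =>
    calc gfun x ≤ gfun (-0.3144) :=
          hg.monotoneOn (Ioc_subset_Icc_self hx) (right_mem_Icc.2 (by norm_num)) hx.2
      _ < hfun (-0.3144) := gfun_lt_hfun_at_endpoint
      _ ≤ hfun x := hh.antitoneOn hx (right_mem_Ioc.2 (by norm_num)) hx.2
  exact ⟨hg, hh, hlt _ ⟨by norm_num, by norm_num⟩, hlt⟩
end
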